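/- arXiv:2409.05208 — 3 statements merged into one kernel-verified Lean document; each statement's English description precedes it below -/
import Mathlib

section
/- For every positive integer k and every integer d ≥ 2, there exists a finite training family Z_train of labeled points in ℝ^d × {1,-1}, a test set Z_test, and a target sample z_target ∈ Z_train, such that for every parameter vector θ ∈ ℝ^d the empirical-loss Hessian H_θ is invertible and the number of training samples z in Z_train with I_θ(z, Z_test) > I_θ(z_target, Z_test) is at least k; i.e., no logistic-regression model places z_target in the top-k influence rankings. Concretely, one may take Z_test = {(e_1,1)} and Z_train consisting of (e_i, y_i) for i = 2,…,d with arbitrary labels y_i ∈ {1,-1}, the point (e_1,1) (the target), and k duplicated copies of (-e_1,1). -/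
open Matrix
noncomputable section

/-- The sigmoid function `σ(t) = 1/(1+exp(-t))`. -/
def sigmoid (t : ℝ) : ℝ := 1 / (1 + Real.exp (-t))

/-- A labeled sample `(x, y)` with `x ∈ ℝ^d` and label `y ∈ ℝ` (intended `y ∈ {1,-1}`). -/
abbrev Sample (d : ℕ) := (Fin d → ℝ) × ℝ

/-- Gradient in `θ` of the logistic loss `L((x,y),θ) = log(1+exp(-y⟨x,θ⟩))`,
namely `-y·σ(-y⟨x,θ⟩)·x`. -/
def lossGrad {d : ℕ} (z : Sample d) (θ : Fin d → ℝ) : Fin d → ℝ :=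
  (-z.2 * sigmoid (-(z.2 * (z.1 ⬝ᵥ θ)))) • z.1

/-- Empirical-loss Hessian `H_θ = (1/n)·Σ_i σ(⟨x_i,θ⟩)σ(-⟨x_i,θ⟩)·x_i x_iᵀ`. -/
def hess {d n : ℕ} (Ztrain : Fin n → Sample d) (θ : Fin d → ℝ) : Matrix (Fin d) (Fin d) ℝ :=
  (n : ℝ)⁻¹ • ∑ i, (sigmoid ((Ztrain i).1 ⬝ᵥ θ) * sigmoid (-((Ztrain i).1 ⬝ᵥ θ))) •
    vecMulVec (Ztrain i).1 (Ztrain i).1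

/-- Influence of a training sample `z` on a test set `Ztest`:
`I_θ(z, Ztest) = Σ_j -g_{ztest_j}(θ)ᵀ H_θ⁻¹ g_z(θ)`. -/
def influence {d n m : ℕ} (Ztrain : Fin n → Sample d) (θ : Fin d → ℝ)
    (z : Sample d) (Ztest : Fin m → Sample d) : ℝ :=
  ∑ j, -(lossGrad (Ztest j) θ ⬝ᵥ ((hess Ztrain θ)⁻¹ *ᵥ lossGrad z θ))

/-!
If every training feature vector lies on a coordinate axis, the Hessian is diagonal, and it is
positive definite as soon as every axis is hit. Against the test sample `(e_a, 1)` the influence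
of a sample `(x, 1)` is then `-c · x_a` with `c > 0`, whatever `θ` is: the target `(e_a, 1)` has
negative influence and every copy of `(-e_a, 1)` positive influence.
-/

lemma sigmoid_pos (t : ℝ) : 0 < sigmoid t :=
  div_pos one_pos (by positivity)

lemma lossGrad_apply_of_label_one {d : ℕ} (x : Fin d → ℝ) (θ : Fin d → ℝ) (a : Fin d) :
    lossGrad (x, 1) θ a = -(sigmoid (-(x ⬝ᵥ θ)) * x a) := by
  simp [lossGrad]

section Hessian

variable {d n : ℕ} (Z : Fin n → Sample d) (θ : Fin d → ℝ)

lemma hess_apply (a b : Fin d) :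
    hess Z θ a b = (n : ℝ)⁻¹ *
      ∑ i, sigmoid ((Z i).1 ⬝ᵥ θ) * sigmoid (-((Z i).1 ⬝ᵥ θ)) * ((Z i).1 a * (Z i).1 b) := by
  simp [hess, Matrix.sum_apply, vecMulVec_apply]

lemma hess_eq_diagonal_of_forall_eq_single (hZ : ∀ i, ∃ j c, (Z i).1 = Pi.single j c) :
    hess Z θ = diagonal fun a => hess Z θ a a := by
  ext a b
  obtain rfl | hab := eq_or_ne a b
  · simp
  rw [diagonal_apply_ne _ hab, hess_apply]
  refine mul_eq_zero_of_right _ (Finset.sum_eq_zero fun i _ => ?_)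
  obtain ⟨j, c, hx⟩ := hZ i
  obtain rfl | haj := eq_or_ne a j
  · simp [hx, Pi.single_eq_of_ne hab.symm]
  · simp [hx, Pi.single_eq_of_ne haj]

lemma hess_apply_self_pos {a : Fin d} (ha : ∃ i, (Z i).1 a ≠ 0) : 0 < hess Z θ a a := by
  obtain ⟨i, hi⟩ := ha
  have hn : (0 : ℝ) < n := by exact_mod_cast i.pos
  rw [hess_apply]
  refine mul_pos (inv_pos.mpr hn) (Finset.sum_pos' (fun j _ => ?_) ⟨i, Finset.mem_univ _, ?_⟩)
  · exact mul_nonneg (mul_pos (sigmoid_pos _) (sigmoid_pos _)).le (mul_self_nonneg _)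
  · exact mul_pos (mul_pos (sigmoid_pos _) (sigmoid_pos _)) (mul_self_pos.mpr hi)

lemma isUnit_hess_of_forall_eq_single (hZ : ∀ i, ∃ j c, (Z i).1 = Pi.single j c)
    (hcover : ∀ a, ∃ i, (Z i).1 a ≠ 0) : IsUnit (hess Z θ) := by
  rw [hess_eq_diagonal_of_forall_eq_single Z θ hZ, isUnit_diagonal, Pi.isUnit_iff]
  exact fun a => (hess_apply_self_pos Z θ (hcover a)).ne'.isUnit

end Hessian

lemma inv_diagonal_of_ne_zero {ι K : Type*} [Fintype ι] [DecidableEq ι] [Field K] {g : ι → K}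
    (hg : ∀ a, g a ≠ 0) : (diagonal g)⁻¹ = diagonal g⁻¹ := by
  refine inv_eq_right_inv ?_
  rw [diagonal_mul_diagonal, ← diagonal_one]
  exact congrArg diagonal (funext fun a => mul_inv_cancel₀ (hg a))

lemma influence_single_test_eq {d n : ℕ} {Z : Fin n → Sample d} {θ : Fin d → ℝ}
    {g : Fin d → ℝ} (hdiag : hess Z θ = diagonal g) (hg : ∀ a, g a ≠ 0) (a : Fin d)
    (x : Fin d → ℝ) :
    influence Z θ (x, 1) (fun _ : Fin 1 => (Pi.single a 1, 1)) =
      -(sigmoid (-θ a) * sigmoid (-(x ⬝ᵥ θ)) * (g a)⁻¹ * x a) := by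
  have htest : lossGrad (Pi.single a 1, 1) θ = (-sigmoid (-θ a)) • Pi.single a 1 := by
    simp [lossGrad, single_dotProduct]
  simp only [influence, Fin.sum_univ_one, hdiag, inv_diagonal_of_ne_zero hg, htest,
    smul_dotProduct, single_dotProduct, mulVec_diagonal, lossGrad_apply_of_label_one,
    smul_eq_mul, Pi.inv_apply]
  ring

section AxisAligned

variable {d n : ℕ} {Z : Fin n → Sample d} {θ : Fin d → ℝ}

lemma influence_single_test_eq_of_forall_eq_single
    (hZ : ∀ i, ∃ j c, (Z i).1 = Pi.single j c) (hcover : ∀ a, ∃ i, (Z i).1 a ≠ 0)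
    (a : Fin d) (x : Fin d → ℝ) :
    ∃ c > 0, influence Z θ (x, 1) (fun _ : Fin 1 => (Pi.single a 1, 1)) = -(c * x a) :=
  ⟨_, mul_pos (mul_pos (sigmoid_pos _) (sigmoid_pos _))
      (inv_pos.mpr (hess_apply_self_pos Z θ (hcover a))),
    influence_single_test_eq (hess_eq_diagonal_of_forall_eq_single Z θ hZ)
      (fun b => (hess_apply_self_pos Z θ (hcover b)).ne') a x⟩

lemma influence_single_test_neg_of_pos (hZ : ∀ i, ∃ j c, (Z i).1 = Pi.single j c)
    (hcover : ∀ a, ∃ i, (Z i).1 a ≠ 0) {a : Fin d} {x : Fin d → ℝ} (hx : 0 < x a) :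
    influence Z θ (x, 1) (fun _ : Fin 1 => (Pi.single a 1, 1)) < 0 := by
  obtain ⟨c, hc, h⟩ := influence_single_test_eq_of_forall_eq_single (θ := θ) hZ hcover a x
  rw [h, neg_lt_zero]
  exact mul_pos hc hx

lemma influence_single_test_pos_of_neg (hZ : ∀ i, ∃ j c, (Z i).1 = Pi.single j c)
    (hcover : ∀ a, ∃ i, (Z i).1 a ≠ 0) {a : Fin d} {x : Fin d → ℝ} (hx : x a < 0) :
    0 < influence Z θ (x, 1) (fun _ : Fin 1 => (Pi.single a 1, 1)) := by
  obtain ⟨c, hc, h⟩ := influence_single_test_eq_of_forall_eq_single (θ := θ) hZ hcover a x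
  rw [h, neg_pos]
  exact mul_neg_of_pos_of_neg hc hx

end AxisAligned

def basisWithNegCopies (d k : ℕ) (a : Fin d) : Fin (d + k) → Sample d :=
  Fin.append (fun j => (Pi.single j 1, 1)) (fun _ => (-Pi.single a 1, 1))

section BasisWithNegCopies

variable {d k : ℕ} {a : Fin d}

lemma basisWithNegCopies_castAdd (j : Fin d) :
    basisWithNegCopies d k a (Fin.castAdd k j) = (Pi.single j 1, 1) :=
  Fin.append_left _ _ j

lemma basisWithNegCopies_natAdd (j : Fin k) :
    basisWithNegCopies d k a (Fin.natAdd d j) = (-Pi.single a 1, 1) :=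
  Fin.append_right _ _ j

lemma basisWithNegCopies_label (i : Fin (d + k)) : (basisWithNegCopies d k a i).2 = 1 := by
  cases i using Fin.addCases with
  | left j => rw [basisWithNegCopies_castAdd]
  | right j => rw [basisWithNegCopies_natAdd]

lemma basisWithNegCopies_eq_single (i : Fin (d + k)) :
    ∃ j c, (basisWithNegCopies d k a i).1 = Pi.single j c := by
  cases i using Fin.addCases with
  | left j => exact ⟨j, 1, by rw [basisWithNegCopies_castAdd]⟩
  | right j => exact ⟨a, -1, by rw [basisWithNegCopies_natAdd, Pi.single_neg]⟩

lemma basisWithNegCopies_cover (b : Fin d) : ∃ i, (basisWithNegCopies d k a i).1 b ≠ 0 :=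
  ⟨Fin.castAdd k b, by simp [basisWithNegCopies_castAdd]⟩

lemma influence_basisWithNegCopies_target_neg (θ : Fin d → ℝ) :
    influence (basisWithNegCopies d k a) θ (basisWithNegCopies d k a (Fin.castAdd k a))
      (fun _ : Fin 1 => (Pi.single a 1, 1)) < 0 := by
  rw [basisWithNegCopies_castAdd]
  exact influence_single_test_neg_of_pos basisWithNegCopies_eq_single
    basisWithNegCopies_cover (by simp)

lemma influence_basisWithNegCopies_copy_pos (θ : Fin d → ℝ) (j : Fin k) :
    0 < influence (basisWithNegCopies d k a) θ (basisWithNegCopies d k a (Fin.natAdd d j))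
      (fun _ : Fin 1 => (Pi.single a 1, 1)) := by
  rw [basisWithNegCopies_natAdd]
  exact influence_single_test_pos_of_neg basisWithNegCopies_eq_single
    basisWithNegCopies_cover (by simp)

end BasisWithNegCopies

theorem influence_impossibility_topk_general (k : ℕ) (d : ℕ) (hd : 2 ≤ d) :
    ∃ (n m : ℕ) (Ztrain : Fin n → Sample d) (Ztest : Fin m → Sample d) (i₀ : Fin n),
      (∀ i, (Ztrain i).2 = 1 ∨ (Ztrain i).2 = -1) ∧
      (∀ j, (Ztest j).2 = 1 ∨ (Ztest j).2 = -1) ∧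
      ∀ θ : Fin d → ℝ,
        IsUnit (hess Ztrain θ) ∧
        k ≤ (Finset.univ.filter (fun i : Fin n =>
          influence Ztrain θ (Ztrain i₀) Ztest < influence Ztrain θ (Ztrain i) Ztest)).card := by
  obtain ⟨a⟩ : Nonempty (Fin d) := ⟨⟨0, by omega⟩⟩
  refine ⟨d + k, 1, basisWithNegCopies d k a, fun _ => (Pi.single a 1, 1), Fin.castAdd k a,
    fun i => Or.inl (basisWithNegCopies_label i), fun _ => Or.inl rfl, fun θ =>
    ⟨isUnit_hess_of_forall_eq_single _ θ basisWithNegCopies_eq_single basisWithNegCopies_cover,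
      ?_⟩⟩
  calc k = (Finset.univ.map (Fin.natAddEmb d)).card := by simp
    _ ≤ _ := Finset.card_le_card fun i hi => by
      obtain ⟨j, -, rfl⟩ := Finset.mem_map.mp hi
      exact Finset.mem_filter.mpr ⟨Finset.mem_univ _,
        (influence_basisWithNegCopies_target_neg θ).trans
          (influence_basisWithNegCopies_copy_pos θ j)⟩

/-- For every positive integer k and every d ≥ 2 there exist a training family,
a test set, and a target index such that for every θ the empirical-loss Hessian is invertible
and at least k training samples have strictly larger influence than the target, i.e. no
logistic-regression model places the target in the top-k influence rankings. -/
theorem influence_impossibility_topk (k : ℕ) (hk : 0 < k) (d : ℕ) (hd : 2 ≤ d) :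
    ∃ (n m : ℕ) (Ztrain : Fin n → Sample d) (Ztest : Fin m → Sample d) (i₀ : Fin n),
      (∀ i, (Ztrain i).2 = 1 ∨ (Ztrain i).2 = -1) ∧
      (∀ j, (Ztest j).2 = 1 ∨ (Ztest j).2 = -1) ∧
      ∀ θ : Fin d → ℝ,
        IsUnit (hess Ztrain θ) ∧
        k ≤ (Finset.univ.filter (fun i : Fin n =>
          influence Ztrain θ (Ztrain i₀) Ztest < influence Ztrain θ (Ztrain i) Ztest)).card :=
  influence_impossibility_topk_general k d hd
end
end

section
/- Fix d ≥ 2, arbitrary labels y_2,…,y_d ∈ {1,-1}, the test set Z_test = {(e_1,1)}, and the training family Z_train = {(e_i, y_i) : i = 2,…,d} ∪ {(e_1,1), (-e_1,1)} of size n = d+1, with z_target = (e_1,1) and z_bar = (-e_1,1). Then for every θ ∈ ℝ^d the empirical-loss Hessian H_θ is invertible and I_θ(z_target, Z_test) < I_θ(z_bar, Z_test); consequently z_target can never attain the top-1 influence ranking among the training samples, for any choice of θ. -/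
open Matrix
noncomputable section

/-- The concrete training family of size `d+1`: index `0` is the target `(e_1, 1)`,
indices `1,...,d-1` are `(e_i, y_i)`, and index `d` is `(-e_1, 1)`. -/
def trainFam (d : ℕ) (hd : 0 < d) (y : Fin d → ℝ) (i : Fin (d + 1)) : Sample d :=
  if h : (i : ℕ) < d then
    if _h0 : (i : ℕ) = 0 then (Pi.single (⟨0, hd⟩ : Fin d) 1, 1)
    else (Pi.single (⟨(i : ℕ), h⟩ : Fin d) 1, y ⟨(i : ℕ), h⟩)
  else (-Pi.single (⟨0, hd⟩ : Fin d) 1, 1)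

/-- The concrete test set `Z_test = {(e_1, 1)}`. -/
def testFam (d : ℕ) (hd : 0 < d) : Fin 1 → Sample d :=
  fun _ => (Pi.single (⟨0, hd⟩ : Fin d) 1, 1)

lemma trainFam_castSucc_fst (d : ℕ) (hd : 0 < d) (y : Fin d → ℝ) (k : Fin d) :
    (trainFam d hd y k.castSucc).1 = Pi.single k 1 := by
  rw [trainFam, dif_pos (by simpa using k.isLt)]
  split_ifs with h0
  · have hk : k = ⟨0, hd⟩ := Fin.ext (by simpa using h0)
    rw [hk]
  · rfl

lemma trainFam_last (d : ℕ) (hd : 0 < d) (y : Fin d → ℝ) :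
    trainFam d hd y (Fin.last d) = (-Pi.single (⟨0, hd⟩ : Fin d) 1, 1) := by
  rw [trainFam, dif_neg (by simp)]

lemma trainFam_zero (d : ℕ) (hd : 0 < d) (y : Fin d → ℝ) :
    trainFam d hd y 0 = (Pi.single (⟨0, hd⟩ : Fin d) 1, 1) := by
  rw [trainFam, dif_pos (by simpa using hd),
    dif_pos (show ((0 : Fin (d+1)) : ℕ) = 0 from rfl)]

/-- The diagonal of the Hessian for the concrete training family. -/
def vv (d : ℕ) (hd : 0 < d) (θ : Fin d → ℝ) (j : Fin d) : ℝ :=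
  ((d : ℝ) + 1)⁻¹ * (if j = ⟨0, hd⟩ then 2 * (sigmoid (θ j) * sigmoid (-θ j))
    else sigmoid (θ j) * sigmoid (-θ j))

lemma vv_pos (d : ℕ) (hd : 0 < d) (θ : Fin d → ℝ) (j : Fin d) : 0 < vv d hd θ j := by
  unfold vv
  have h1 := sigmoid_pos (θ j); have h2 := sigmoid_pos (-θ j)
  split_ifs <;> positivity

lemma hess_eq (d : ℕ) (hd : 0 < d) (y : Fin d → ℝ) (θ : Fin d → ℝ) :
    hess (trainFam d hd y) θ = Matrix.diagonal (vv d hd θ) := by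
  unfold hess
  ext i j
  simp only [Matrix.smul_apply, Matrix.sum_apply, smul_eq_mul]
  rw [Fin.sum_univ_castSucc]
  simp only [trainFam_castSucc_fst d hd y, trainFam_last, vecMulVec_apply]
  by_cases hij : i = j
  · subst hij
    simp only [Matrix.diagonal_apply_eq, vv]
    by_cases h0 : i = ⟨0, hd⟩
    · subst h0
      simp [Pi.single_apply, mul_ite, ite_mul, Finset.sum_ite_eq, Finset.sum_ite_eq']
      ring_nf
      simp
    · simp [Pi.single_apply, mul_ite, ite_mul, Finset.sum_ite_eq, Finset.sum_ite_eq', h0,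
        Ne.symm h0]
  · rw [Matrix.diagonal_apply_ne _ hij]
    have : ∀ k : Fin d, (Pi.single k (1:ℝ) : Fin d → ℝ) i * (Pi.single k (1:ℝ) : Fin d → ℝ) j = 0 := by
      intro k
      rcases eq_or_ne i k with rfl | h
      · simp [Pi.single_apply, Ne.symm hij]
      · simp [Pi.single_apply, h]
    simp [this, Pi.single_apply]
    right
    rw [if_neg hij]
    rcases eq_or_ne j ⟨0, hd⟩ with h1 | h1
    · rcases eq_or_ne i ⟨0, hd⟩ with h2 | h2
      · exact absurd (h2.trans h1.symm) hij
      · simp [h1, h2]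
    · simp [h1]

lemma hess_isUnit (d : ℕ) (hd : 0 < d) (y : Fin d → ℝ) (θ : Fin d → ℝ) :
    IsUnit (hess (trainFam d hd y) θ) := by
  rw [hess_eq d hd y θ, Matrix.isUnit_iff_isUnit_det, Matrix.det_diagonal]
  exact isUnit_iff_ne_zero.2 (ne_of_gt (Finset.prod_pos fun j _ => vv_pos d hd θ j))

lemma hess_inv (d : ℕ) (hd : 0 < d) (y : Fin d → ℝ) (θ : Fin d → ℝ) :
    (hess (trainFam d hd y) θ)⁻¹ = Matrix.diagonal (fun j => (vv d hd θ j)⁻¹) := by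
  rw [hess_eq d hd y θ]
  apply Matrix.inv_eq_right_inv
  rw [Matrix.diagonal_mul_diagonal]
  have h1 : (fun i => vv d hd θ i * (vv d hd θ i)⁻¹) = fun _ : Fin d => (1:ℝ) :=
    funext fun j => mul_inv_cancel₀ (ne_of_gt (vv_pos d hd θ j))
  rw [h1]
  exact Matrix.diagonal_one

lemma influence_eq (d : ℕ) (hd : 0 < d) (y : Fin d → ℝ) (θ : Fin d → ℝ) (z : Sample d) :
    influence (trainFam d hd y) θ z (testFam d hd) =
      sigmoid (-θ ⟨0, hd⟩) * ((vv d hd θ ⟨0, hd⟩)⁻¹ * lossGrad z θ ⟨0, hd⟩) := by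
  unfold influence testFam
  rw [Fin.sum_univ_one, hess_inv d hd y θ]
  simp [lossGrad, Matrix.mulVec_diagonal]

/-- For the concrete construction, for every `θ` the empirical-loss Hessian is
invertible and the influence of the target `(e_1,1)` is strictly smaller than that of
`(-e_1,1)`; consequently the target never attains the top-1 influence ranking. -/
theorem influence_target_lt_bar (d : ℕ) (hd : 2 ≤ d) (y : Fin d → ℝ)
    (hy : ∀ i, y i = 1 ∨ y i = -1) (θ : Fin d → ℝ) :
    IsUnit (hess (trainFam d (by omega) y) θ) ∧
    influence (trainFam d (by omega) y) θ (trainFam d (by omega) y 0)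
        (testFam d (by omega)) <
      influence (trainFam d (by omega) y) θ (trainFam d (by omega) y (Fin.last d))
        (testFam d (by omega)) ∧
    ¬ (∀ i : Fin (d + 1),
        influence (trainFam d (by omega) y) θ (trainFam d (by omega) y i)
            (testFam d (by omega)) ≤
          influence (trainFam d (by omega) y) θ (trainFam d (by omega) y 0)
            (testFam d (by omega))) := by
  have hd0 : 0 < d := by omega
  have key : influence (trainFam d hd0 y) θ (trainFam d hd0 y 0) (testFam d hd0) <
      influence (trainFam d hd0 y) θ (trainFam d hd0 y (Fin.last d)) (testFam d hd0) := by
    rw [trainFam_zero, trainFam_last, influence_eq d hd0 y θ, influence_eq d hd0 y θ]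
    have ha := sigmoid_pos (-θ ⟨0, hd0⟩)
    have hb := sigmoid_pos (θ ⟨0, hd0⟩)
    have hc : 0 < (vv d hd0 θ ⟨0, hd0⟩)⁻¹ := inv_pos.2 (vv_pos d hd0 θ ⟨0, hd0⟩)
    simp only [lossGrad, Pi.smul_apply, Pi.neg_apply, Pi.single_eq_same, smul_eq_mul,
      neg_dotProduct]
    have h1 : (Pi.single (⟨0, hd0⟩ : Fin d) (1:ℝ) : Fin d → ℝ) ⬝ᵥ θ = θ ⟨0, hd0⟩ := by simp
    rw [h1, show -(1 * θ ⟨0, hd0⟩) = -θ ⟨0, hd0⟩ by ring,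
      show -(1 * -θ ⟨0, hd0⟩) = θ ⟨0, hd0⟩ by ring]
    nlinarith [mul_pos (mul_pos ha hc) hb, mul_pos (mul_pos ha hc) ha]
  exact ⟨hess_isUnit d hd0 y θ, key, fun h => absurd (h (Fin.last d)) (not_le.2 key)⟩
end
end

section
/- Let H : ℝ^p → Matrix(d×d, ℝ) and v_1, v_2 : ℝ^p → ℝ^d be differentiable at θ_0 ∈ ℝ^p, with H(θ_0) symmetric and invertible, and set u_1 = H(θ_0)^{-1} v_1(θ_0) and u_2 = H(θ_0)^{-1} v_2(θ_0) (held fixed). Define the original objective f(θ) = v_1(θ)ᵀ H(θ)^{-1} v_2(θ) and the backward-friendly objective g(θ) = v_1(θ)ᵀ u_2 + u_1ᵀ v_2(θ) - u_1ᵀ H(θ) u_2. Then g(θ_0) = f(θ_0) and the Fréchet derivatives agree: Dg(θ_0) = Df(θ_0). -/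
/-!
Near `θ₀` the matrix `H θ` stays invertible, and there the original objective is the
backward-friendly one minus a remainder:
`f θ = g θ - (v₁ θ - u₁ᵀ H θ) ⬝ (u₂ - (H θ)⁻¹ v₂ θ)`.
Both factors of the remainder vanish at `θ₀` (the first by symmetry of `H θ₀`); the first is
differentiable and the second continuous, so the remainder is `o(θ - θ₀)` and has zero derivative.
In particular the inverse `(H θ)⁻¹` only needs to be continuous, never differentiated.
-/

open Matrix Asymptotics Filter Topology

section Differentiability

variable {𝕜 E m n : Type*} [NontriviallyNormedField 𝕜] [NormedAddCommGroup E] [NormedSpace 𝕜 E]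
  [Fintype m] [Fintype n] {x : E}

theorem hasFDerivAt_mul_of_apply_eq_zero {a b : E → 𝕜} (ha : DifferentiableAt 𝕜 a x)
    (ha₀ : a x = 0) (hb : ContinuousAt b x) (hb₀ : b x = 0) :
    HasFDerivAt (fun y => a y * b y) (0 : E →L[𝕜] 𝕜) x := by
  have hO : a =O[𝓝 x] fun y => ‖y - x‖ := by
    simpa [ha₀] using ha.isBigO_sub.norm_right
  have ho : b =o[𝓝 x] fun _ => (1 : ℝ) := (isLittleO_one_iff ℝ).2 (hb₀ ▸ hb.tendsto)
  refine HasFDerivAt.of_isLittleO ?_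
  simpa [ha₀] using (hO.mul_isLittleO ho).norm_right

theorem hasFDerivAt_dotProduct_of_apply_eq_zero {a b : E → n → 𝕜} (ha : DifferentiableAt 𝕜 a x)
    (ha₀ : a x = 0) (hb : ContinuousAt b x) (hb₀ : b x = 0) :
    HasFDerivAt (fun y => a y ⬝ᵥ b y) (0 : E →L[𝕜] 𝕜) x := by
  simpa [dotProduct] using HasFDerivAt.fun_sum (u := Finset.univ) fun i _ =>
    hasFDerivAt_mul_of_apply_eq_zero (differentiableAt_pi.1 ha i) (congrFun ha₀ i)
      (continuousAt_pi.1 hb i) (congrFun hb₀ i)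

@[fun_prop]
theorem DifferentiableAt.dotProduct {a b : E → n → 𝕜} (ha : DifferentiableAt 𝕜 a x)
    (hb : DifferentiableAt 𝕜 b x) : DifferentiableAt 𝕜 (fun y => a y ⬝ᵥ b y) x := by
  simp only [_root_.dotProduct]
  fun_prop

@[fun_prop]
theorem DifferentiableAt.vecMul {u : E → m → 𝕜} {M : E → Matrix m n 𝕜}
    (hu : DifferentiableAt 𝕜 u x) (hM : DifferentiableAt 𝕜 M x) :
    DifferentiableAt 𝕜 (fun y => u y ᵥ* M y) x := by
  have hcol (j : n) : DifferentiableAt 𝕜 (fun y i => M y i j) x :=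
    differentiableAt_pi.2 fun i => differentiableAt_pi.1 (differentiableAt_pi.1 hM i) j
  exact differentiableAt_pi.2 fun j => hu.dotProduct (hcol j)

end Differentiability

theorem Matrix.dotProduct_inv_mulVec_eq_sub_dotProduct {n R : Type*} [Fintype n] [DecidableEq n]
    [CommRing R] {M : Matrix n n R} (hM : IsUnit M.det) (v₁ v₂ u₁ u₂ : n → R) :
    v₁ ⬝ᵥ (M⁻¹ *ᵥ v₂) =
      v₁ ⬝ᵥ u₂ + u₁ ⬝ᵥ v₂ - u₁ ⬝ᵥ (M *ᵥ u₂) - (v₁ - u₁ ᵥ* M) ⬝ᵥ (u₂ - M⁻¹ *ᵥ v₂) := by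
  rw [sub_dotProduct, dotProduct_sub, dotProduct_sub, ← dotProduct_mulVec, ← dotProduct_mulVec,
    mulVec_mulVec, mul_nonsing_inv _ hM, one_mulVec]
  ring

/-- with `H`, `v₁`, `v₂` differentiable at `θ₀`, `H θ₀` symmetric and
invertible, and the frozen vectors `u₁ = (H θ₀)⁻¹ v₁(θ₀)`, `u₂ = (H θ₀)⁻¹ v₂(θ₀)`,
the backward-friendly objective `g(θ) = v₁(θ)ᵀ u₂ + u₁ᵀ v₂(θ) - u₁ᵀ H(θ) u₂` agrees with
the original objective `f(θ) = v₁(θ)ᵀ (H θ)⁻¹ v₂(θ)` at `θ₀`, both in value and in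
Fréchet derivative. -/
theorem backward_friendly_objective_agrees (p d : ℕ)
    (H : (Fin p → ℝ) → Matrix (Fin d) (Fin d) ℝ)
    (v₁ v₂ : (Fin p → ℝ) → (Fin d → ℝ))
    (θ₀ : Fin p → ℝ)
    (hH : DifferentiableAt ℝ H θ₀)
    (hv₁ : DifferentiableAt ℝ v₁ θ₀)
    (hv₂ : DifferentiableAt ℝ v₂ θ₀)
    (hsymm : (H θ₀).IsSymm)
    (hinv : IsUnit (H θ₀))
    (u₁ u₂ : Fin d → ℝ)
    (hu₁ : u₁ = (H θ₀)⁻¹ *ᵥ v₁ θ₀)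
    (hu₂ : u₂ = (H θ₀)⁻¹ *ᵥ v₂ θ₀) :
    (v₁ θ₀ ⬝ᵥ u₂ + u₁ ⬝ᵥ v₂ θ₀ - u₁ ⬝ᵥ (H θ₀ *ᵥ u₂)) =
      v₁ θ₀ ⬝ᵥ ((H θ₀)⁻¹ *ᵥ v₂ θ₀) ∧
    fderiv ℝ (fun θ => v₁ θ ⬝ᵥ u₂ + u₁ ⬝ᵥ v₂ θ - u₁ ⬝ᵥ (H θ *ᵥ u₂)) θ₀ =
      fderiv ℝ (fun θ => v₁ θ ⬝ᵥ ((H θ)⁻¹ *ᵥ v₂ θ)) θ₀ := by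
  have hdet : IsUnit (H θ₀).det := (isUnit_iff_isUnit_det _).1 hinv
  have hHu₂ : H θ₀ *ᵥ u₂ = v₂ θ₀ := by
    rw [hu₂, mulVec_mulVec, mul_nonsing_inv _ hdet, one_mulVec]
  refine ⟨by rw [hHu₂, ← hu₂, add_sub_cancel_right], ?_⟩
  have hg : DifferentiableAt ℝ
      (fun θ => v₁ θ ⬝ᵥ u₂ + u₁ ⬝ᵥ v₂ θ - u₁ ⬝ᵥ (H θ *ᵥ u₂)) θ₀ := by
    simp only [dotProduct_mulVec]
    fun_prop
  have ha₀ : v₁ θ₀ - u₁ ᵥ* H θ₀ = 0 := by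
    rw [← hsymm.eq, vecMul_transpose, hu₁, mulVec_mulVec, mul_nonsing_inv _ hdet, one_mulVec,
      sub_self]
  have hinv_cont : ContinuousAt (fun θ => (H θ)⁻¹) θ₀ :=
    (continuousAt_matrix_inv _ (NormedRing.inverse_continuousAt hdet.unit)).comp hH.continuousAt
  have hb : ContinuousAt (fun θ => u₂ - (H θ)⁻¹ *ᵥ v₂ θ) θ₀ :=
    continuousAt_const.sub ((continuous_fst.matrix_mulVec continuous_snd).continuousAt.comp
      (hinv_cont.prodMk hv₂.continuousAt))
  have ha : DifferentiableAt ℝ (fun θ => v₁ θ - u₁ ᵥ* H θ) θ₀ := by fun_prop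
  have hremainder := hasFDerivAt_dotProduct_of_apply_eq_zero ha ha₀ hb (by rw [hu₂, sub_self])
  have hnear : ∀ᶠ θ in 𝓝 θ₀, IsUnit (H θ).det := by
    filter_upwards [(continuous_id.matrix_det.continuousAt.comp hH.continuousAt).eventually_ne
      hdet.ne_zero] with θ hθ using isUnit_iff_ne_zero.2 hθ
  have hf := (hg.hasFDerivAt.sub hremainder).congr_of_eventuallyEq
    (hnear.mono fun θ hθ => dotProduct_inv_mulVec_eq_sub_dotProduct hθ (v₁ θ) (v₂ θ) u₁ u₂)
  rw [hf.fderiv, sub_zero]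
end
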